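/- arXiv:1512.00075 — 2 statements merged into one kernel-verified Lean document; each statement's English description precedes it below -/
import Mathlib

section
/- Let f and (f_n) be measure-preserving homeomorphisms of a compact metric measure space X with μ(X) = 1 and let (m_n) be natural numbers with d₀(f^{m_n}, f_n^{m_n}) < 1/2^n, where d₀ is the uniform distance. Suppose for every cube A and every ε ∈ (0,1] there is N such that for n ≥ N and every element Γ of a partial partition ν_n: |μ(Γ ∩ f_n^{-m_n}(A)) − μ(Γ)·μ(A)| ≤ ε·μ(Γ)·μ(A). Then, given cubes A₁ ⊂ A ⊂ A₂ with μ(A Δ A_i) < ε·μ(A) and dist(∂A, ∂A_i) > 1/2^n for i = 1,2, one obtains |μ(Γ ∩ f^{-m_n}(A)) − μ(Γ)·μ(A)| ≤ 3ε·μ(Γ)·μ(A) for all sufficiently large n. -/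
open MeasureTheory Filter Set

/-- Let `f` and `fseq n` be measure-preserving maps of a compact
metric probability space with `d₀(f^{m n}, (fseq n)^{m n}) < 1/2^n` (uniform distance).
If the `(fseq n)`-distribution estimate with constant `ε` holds on the cubes `A₁, A₂`
sandwiching `A` (with `μ(A Δ Aᵢ) < ε·μ(A)` and boundary distance `> 1/2^n`, expressed
via thickenings, for large `n`), then `|μ(Γ ∩ f^{-m n}(A)) − μ(Γ)μ(A)| ≤ 3ε·μ(Γ)·μ(A)`
for all sufficiently large `n` and all partition elements `Γ`. -/
theorem stmt3 {X : Type*} [MetricSpace X] [CompactSpace X] [MeasurableSpace X]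
    [BorelSpace X] (μ : Measure X) [IsProbabilityMeasure μ]
    (f : X → X) (fseq : ℕ → X → X)
    (hf : MeasurePreserving f μ μ) (hfseq : ∀ n, MeasurePreserving (fseq n) μ μ)
    (m : ℕ → ℕ)
    (hd0 : ∀ n, ∀ x : X, dist (f^[m n] x) ((fseq n)^[m n] x) < 1 / 2 ^ n)
    (ν : ℕ → Set (Set X)) (hν : ∀ n, ∀ Γ ∈ ν n, MeasurableSet Γ)
    (ε : ℝ) (hε : 0 < ε) (hε1 : ε ≤ 1)
    (A A₁ A₂ : Set X)
    (hmA : MeasurableSet A) (hmA₁ : MeasurableSet A₁) (hmA₂ : MeasurableSet A₂)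
    (h1A : A₁ ⊆ A) (hA2 : A ⊆ A₂)
    (hμ1 : (μ (symmDiff A A₁)).toReal < ε * (μ A).toReal)
    (hμ2 : (μ (symmDiff A A₂)).toReal < ε * (μ A).toReal)
    (N₀ : ℕ)
    (hb1 : ∀ n ≥ N₀, Metric.thickening (1 / 2 ^ n) A₁ ⊆ A)
    (hb2 : ∀ n ≥ N₀, Metric.thickening (1 / 2 ^ n) A ⊆ A₂)
    (hyp : ∀ B ∈ ({A₁, A₂} : Set (Set X)), ∃ N : ℕ, ∀ n ≥ N, ∀ Γ ∈ ν n,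
      |(μ (Γ ∩ (fseq n)^[m n] ⁻¹' B)).toReal - (μ Γ).toReal * (μ B).toReal|
        ≤ ε * (μ Γ).toReal * (μ B).toReal) :
    ∃ N : ℕ, ∀ n ≥ N, ∀ Γ ∈ ν n,
      |(μ (Γ ∩ f^[m n] ⁻¹' A)).toReal - (μ Γ).toReal * (μ A).toReal|
        ≤ 3 * ε * (μ Γ).toReal * (μ A).toReal := by

  obtain ⟨N₁, h₁⟩ := hyp A₁ (by simp)
  obtain ⟨N₂, h₂⟩ := hyp A₂ (by simp)
  refine ⟨max N₀ (max N₁ N₂), fun n hn Γ hΓ => ?_⟩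
  have hn0 : n ≥ N₀ := le_trans (le_max_left _ _) hn
  have hn1 : n ≥ N₁ := le_trans (le_trans (le_max_left _ _) (le_max_right _ _)) hn
  have hn2 : n ≥ N₂ := le_trans (le_trans (le_max_right _ _) (le_max_right _ _)) hn
  have key1 : (fseq n)^[m n] ⁻¹' A₁ ⊆ f^[m n] ⁻¹' A := by
    intro x hx
    apply hb1 n hn0
    rw [Metric.mem_thickening_iff]
    exact ⟨(fseq n)^[m n] x, hx, hd0 n x⟩
  have key2 : f^[m n] ⁻¹' A ⊆ (fseq n)^[m n] ⁻¹' A₂ := by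
    intro x hx
    apply hb2 n hn0
    rw [Metric.mem_thickening_iff]
    exact ⟨f^[m n] x, hx, by rw [dist_comm]; exact hd0 n x⟩
  have hfin : ∀ s : Set X, μ s ≠ ⊤ := fun s => measure_ne_top μ s
  have mono1 : (μ (Γ ∩ (fseq n)^[m n] ⁻¹' A₁)).toReal ≤ (μ (Γ ∩ f^[m n] ⁻¹' A)).toReal :=
    ENNReal.toReal_mono (hfin _) (measure_mono (inter_subset_inter_right _ key1))
  have mono2 : (μ (Γ ∩ f^[m n] ⁻¹' A)).toReal ≤ (μ (Γ ∩ (fseq n)^[m n] ⁻¹' A₂)).toReal :=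
    ENNReal.toReal_mono (hfin _) (measure_mono (inter_subset_inter_right _ key2))
  have e1 := h₁ n hn1 Γ hΓ
  have e2 := h₂ n hn2 Γ hΓ
  have hsd1 : symmDiff A A₁ = A \ A₁ := by
    rw [Set.symmDiff_def, Set.diff_eq_empty.mpr h1A]; simp
  have hsd2 : symmDiff A A₂ = A₂ \ A := by
    rw [Set.symmDiff_def, Set.diff_eq_empty.mpr hA2]; simp
  have hdm1 : (μ (A \ A₁)).toReal = (μ A).toReal - (μ A₁).toReal := by
    rw [measure_diff h1A hmA₁.nullMeasurableSet (hfin _),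
      ENNReal.toReal_sub_of_le (measure_mono h1A) (hfin _)]
  have hdm2 : (μ (A₂ \ A)).toReal = (μ A₂).toReal - (μ A).toReal := by
    rw [measure_diff hA2 hmA.nullMeasurableSet (hfin _),
      ENNReal.toReal_sub_of_le (measure_mono hA2) (hfin _)]
  rw [hsd1, hdm1] at hμ1
  rw [hsd2, hdm2] at hμ2
  set g := (μ Γ).toReal with hg
  set a := (μ A).toReal with ha
  set a1 := (μ A₁).toReal with ha1
  set a2 := (μ A₂).toReal with ha2
  have hg0 : 0 ≤ g := ENNReal.toReal_nonneg
  have ha0 : 0 ≤ a := ENNReal.toReal_nonneg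
  have ha10 : 0 ≤ a1 := ENNReal.toReal_nonneg
  have ha20 : 0 ≤ a2 := ENNReal.toReal_nonneg
  have ha1le : a1 ≤ a := ENNReal.toReal_mono (hfin _) (measure_mono h1A)
  have p1 : g * (a - a1) ≤ g * (ε * a) := mul_le_mul_of_nonneg_left hμ1.le hg0
  have p2 : g * (a2 - a) ≤ g * (ε * a) := mul_le_mul_of_nonneg_left hμ2.le hg0
  have p3 : ε * g * a1 ≤ ε * g * a :=
    mul_le_mul_of_nonneg_left ha1le (mul_nonneg hε.le hg0)
  have p4 : ε * (g * (a2 - a)) ≤ ε * (g * (ε * a)) :=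
    mul_le_mul_of_nonneg_left p2 hε.le
  have p5 : ε * ε * g * a ≤ ε * g * a := by
    nlinarith [mul_nonneg (mul_nonneg hε.le (mul_nonneg hg0 ha0)) (sub_nonneg.mpr hε1)]
  have hεga : 0 ≤ ε * g * a := mul_nonneg (mul_nonneg hε.le hg0) ha0
  rw [abs_le] at e1 e2 ⊢
  constructor
  · nlinarith [e1.1]
  · nlinarith [e2.2]
end

section
/- With the hypotheses of the convergence lemma (|α − α_n| ≤ 1/(2 k_n C_{k_n} |||H_n|||_{k_n+1}^{k_n+1}), k_n strictly increasing with Σ 1/k_n < ∞), the diffeomorphisms f̂_n = H_n ∘ R_α ∘ H_n^{-1} satisfy d_k(f_n, f̂_n) ≤ 1/k_n for every k ≤ k_n, and consequently d_∞(f̂_n, f) → 0, where f = lim f_n; hence f lies in the closure 𝒜_α(M) of {h ∘ R_α ∘ h^{-1} : h ∈ Diff^∞(M, μ)} in the C^∞ topology. -/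
open Function Set

/-- Unit vector in the first (circle) coordinate direction of `S¹ × [0,1]^{m-1}`,
viewed in the universal cover `ℝ^m`. -/
def e0 (m : ℕ) : Fin m → ℝ := fun i => if i.val = 0 then 1 else 0

/-- A smooth diffeomorphism of `M = S¹ × [0,1]^{m-1}`, represented by its lift to
`ℝ^m = ℝ × ℝ^{m-1}`, `ℤ`-periodic in the first coordinate, with its inverse. -/
structure StripDiffeo (m : ℕ) where
  toFun : (Fin m → ℝ) → (Fin m → ℝ)
  invFun : (Fin m → ℝ) → (Fin m → ℝ)
  smooth : ContDiff ℝ (⊤ : ℕ∞) toFun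
  smooth_inv : ContDiff ℝ (⊤ : ℕ∞) invFun
  left_inv : Function.LeftInverse invFun toFun
  right_inv : Function.RightInverse invFun toFun
  periodic : ∀ x, toFun (x + e0 m) = toFun x + e0 m
  periodic_inv : ∀ x, invFun (x + e0 m) = invFun x + e0 m

namespace StripDiffeo

variable {m : ℕ}

/-- The identity diffeomorphism. -/
def idD (m : ℕ) : StripDiffeo m where
  toFun := id
  invFun := id
  smooth := contDiff_id
  smooth_inv := contDiff_id
  left_inv := fun _ => rfl
  right_inv := fun _ => rfl
  periodic := fun _ => rfl
  periodic_inv := fun _ => rfl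

/-- The inverse diffeomorphism. -/
def symm (f : StripDiffeo m) : StripDiffeo m where
  toFun := f.invFun
  invFun := f.toFun
  smooth := f.smooth_inv
  smooth_inv := f.smooth
  left_inv := f.right_inv
  right_inv := f.left_inv
  periodic := f.periodic_inv
  periodic_inv := f.periodic

/-- Composition of diffeomorphisms. -/
def comp (f g : StripDiffeo m) : StripDiffeo m where
  toFun := f.toFun ∘ g.toFun
  invFun := g.invFun ∘ f.invFun
  smooth := f.smooth.comp g.smooth
  smooth_inv := g.smooth_inv.comp f.smooth_inv
  left_inv := fun x => by
    show g.invFun (f.invFun (f.toFun (g.toFun x))) = x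
    rw [f.left_inv, g.left_inv]
  right_inv := fun x => by
    show f.toFun (g.toFun (g.invFun (f.invFun x))) = x
    rw [g.right_inv, f.right_inv]
  periodic := fun x => by
    show f.toFun (g.toFun (x + e0 m)) = f.toFun (g.toFun x) + e0 m
    rw [g.periodic, f.periodic]
  periodic_inv := fun x => by
    show g.invFun (f.invFun (x + e0 m)) = g.invFun (f.invFun x) + e0 m
    rw [f.periodic_inv, g.periodic_inv]

/-- Iterates of a diffeomorphism. -/
def pow (f : StripDiffeo m) : ℕ → StripDiffeo m
  | 0 => idD m
  | k + 1 => (pow f k).comp f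

/-- The rotation `R_α(θ, r) = (θ + α, r)` of `S¹ × [0,1]^{m-1}`. -/
def rot (m : ℕ) (α : ℝ) : StripDiffeo m where
  toFun := fun x => x + α • e0 m
  invFun := fun x => x - α • e0 m
  smooth := contDiff_id.add contDiff_const
  smooth_inv := contDiff_id.sub contDiff_const
  left_inv := fun x => by dsimp only; abel
  right_inv := fun x => by dsimp only; abel
  periodic := fun x => by abel
  periodic_inv := fun x => by abel

/-- The conjugate `h ∘ R_α ∘ h⁻¹`. -/
def conj (h : StripDiffeo m) (α : ℝ) : StripDiffeo m :=
  (h.comp (rot m α)).comp h.symm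

end StripDiffeo

/-- `C^k`-distance of two maps (and hence of two diffeomorphisms via their lifts):
the supremum, over the fundamental domain `[0,1]^m` and all orders `i ≤ k`, of the
norms of the `i`-th derivatives of the difference. -/
noncomputable def dtil (m k : ℕ) (f g : (Fin m → ℝ) → (Fin m → ℝ)) : ℝ :=
  ⨆ (i : Fin (k + 1)) (x : Icc (0 : Fin m → ℝ) 1),
    ‖iteratedFDeriv ℝ i (fun y => f y - g y) ↑x‖

/-- The metric `d_k` on diffeomorphisms, taking both maps and inverses into account. -/
noncomputable def dkDist (m k : ℕ) (f g : StripDiffeo m) : ℝ :=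
  max (dtil m k f.toFun g.toFun) (dtil m k f.invFun g.invFun)

/-- The norm `|||h|||_k`: maximum of the sup-norms of all partial derivatives of order
`≤ k` of `h` and of `h⁻¹`. -/
noncomputable def normk (m k : ℕ) (f : StripDiffeo m) : ℝ :=
  max (dtil m k f.toFun (fun _ => 0)) (dtil m k f.invFun (fun _ => 0))

/-- The complete metric `d_∞ = Σ_k 2^{-k} d_k/(1+d_k)` on `Diff^∞(M)`. -/
noncomputable def dinf (m : ℕ) (f g : StripDiffeo m) : ℝ :=
  ∑' k : ℕ, dkDist m (k + 1) f g / (2 ^ (k + 1) * (1 + dkDist m (k + 1) f g))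


section Aux

open Filter

variable {m k : ℕ} {f g h : (Fin m → ℝ) → (Fin m → ℝ)}

lemma icc_nonempty : Nonempty (Icc (0 : Fin m → ℝ) 1) :=
  Set.Nonempty.to_subtype (Set.nonempty_Icc.2 (by intro i; norm_num))

lemma dtil_nonneg : 0 ≤ dtil m k f g :=
  Real.iSup_nonneg fun _ => Real.iSup_nonneg fun _ => norm_nonneg _

lemma dtil_symm : dtil m k f g = dtil m k g f := by
  unfold dtil
  congr 1; funext i; congr 1; funext x
  have : (fun y => f y - g y) = -(fun y => g y - f y) := by funext y; simp
  rw [this, iteratedFDeriv_neg_apply, norm_neg]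

lemma dtil_mono {k' : ℕ} (hkk : k ≤ k') : dtil m k f g ≤ dtil m k' f g := by
  have := @icc_nonempty m
  unfold dtil
  apply ciSup_le
  intro i
  exact le_ciSup (f := fun j : Fin (k' + 1) =>
      ⨆ x : Icc (0 : Fin m → ℝ) 1, ‖iteratedFDeriv ℝ ↑j (fun y => f y - g y) ↑x‖)
    (Set.Finite.bddAbove (Set.finite_range _)) (⟨i.val, by omega⟩ : Fin (k' + 1))

lemma bddAbove_aux (φ : (Fin m → ℝ) → Fin m → ℝ) (hφ : ContDiff ℝ (⊤ : ℕ∞) φ) (i : ℕ) :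
    BddAbove (Set.range fun x : Icc (0 : Fin m → ℝ) 1 => ‖iteratedFDeriv ℝ i φ ↑x‖) := by
  have e : (fun x : Icc (0 : Fin m → ℝ) 1 => ‖iteratedFDeriv ℝ i φ ↑x‖)
      = (fun y => ‖iteratedFDeriv ℝ i φ y‖) ∘ Subtype.val := rfl
  rw [e, Set.range_comp, Subtype.range_coe]
  exact ((isCompact_Icc).image ((hφ.continuous_iteratedFDeriv (by exact_mod_cast le_top)).norm)).bddAbove

lemma le_dtil (hfg : ContDiff ℝ (⊤ : ℕ∞) fun y => f y - g y) (i : Fin (k + 1))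
    (x : Icc (0 : Fin m → ℝ) 1) :
    ‖iteratedFDeriv ℝ i (fun y => f y - g y) ↑x‖ ≤ dtil m k f g := by
  refine le_trans (le_ciSup (bddAbove_aux _ hfg i) x) ?_
  exact le_ciSup (f := fun j : Fin (k + 1) =>
      ⨆ x : Icc (0 : Fin m → ℝ) 1, ‖iteratedFDeriv ℝ ↑j (fun y => f y - g y) ↑x‖)
    (Set.Finite.bddAbove (Set.finite_range _)) i

lemma dtil_triangle (hf : ContDiff ℝ (⊤ : ℕ∞) f) (hg : ContDiff ℝ (⊤ : ℕ∞) g) (hh : ContDiff ℝ (⊤ : ℕ∞) h) :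
    dtil m k f g ≤ dtil m k f h + dtil m k h g := by
  have := @icc_nonempty m
  apply ciSup_le; intro i; apply ciSup_le; intro x
  have e1 : (fun y => f y - g y) = fun y => (f y - h y) + (h y - g y) := by
    funext y; abel
  rw [e1, iteratedFDeriv_add_apply' ((hf.sub hh).of_le (by exact_mod_cast le_top)).contDiffAt ((hh.sub hg).of_le (by exact_mod_cast le_top)).contDiffAt]
  exact le_trans (norm_add_le _ _)
    (add_le_add (le_dtil (hf.sub hh) i x) (le_dtil (hh.sub hg) i x))

lemma dkDist_nonneg {f g : StripDiffeo m} : 0 ≤ dkDist m k f g :=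
  le_max_of_le_left dtil_nonneg

lemma dkDist_symm (f g : StripDiffeo m) : dkDist m k f g = dkDist m k g f := by
  unfold dkDist
  rw [dtil_symm (f := f.toFun), dtil_symm (f := f.invFun)]

lemma dkDist_mono {k' : ℕ} (hkk : k ≤ k') {f g : StripDiffeo m} :
    dkDist m k f g ≤ dkDist m k' f g :=
  max_le_max (dtil_mono hkk) (dtil_mono hkk)

lemma dkDist_triangle (f g h : StripDiffeo m) :
    dkDist m k f g ≤ dkDist m k f h + dkDist m k h g := by
  refine max_le ?_ ?_
  · exact (dtil_triangle f.smooth g.smooth h.smooth).trans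
      (add_le_add (le_max_left _ _) (le_max_left _ _))
  · exact (dtil_triangle f.smooth_inv g.smooth_inv h.smooth_inv).trans
      (add_le_add (le_max_right _ _) (le_max_right _ _))

lemma normk_nonneg {f : StripDiffeo m} : 0 ≤ normk m k f :=
  le_max_of_le_left dtil_nonneg

lemma dinf_symm (f g : StripDiffeo m) : dinf m f g = dinf m g f :=
  tsum_congr fun k => by rw [dkDist_symm]

end Aux

open Filter

set_option maxHeartbeats 1000000 in
/-- Under the hypotheses of the convergence lemma, the
diffeomorphisms `f̂ₙ = Hₙ ∘ R_α ∘ Hₙ⁻¹` satisfy `d_k(fₙ, f̂ₙ) ≤ 1/kₙ` for every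
`k ≤ kₙ`, and consequently `d_∞(f̂ₙ, f) → 0` where `f = lim fₙ`; hence `f` lies in the
closure `𝒜_α(M)` of the conjugates of `R_α` with respect to the `C^∞` metric. -/
theorem stmt10 (m : ℕ)
    (kseq : ℕ → ℕ) (hk : StrictMono kseq) (hkpos : ∀ n, 0 < kseq n)
    (hsum : Summable fun n : ℕ => (1 : ℝ) / kseq n)
    (C : ℕ → ℝ) (hCpos : ∀ k, 0 < C k)
    (hC : ∀ (k : ℕ) (h : StripDiffeo m) (α β : ℝ),
      dkDist m k (h.conj α) (h.conj β) ≤ C k * normk m (k + 1) h ^ (k + 1) * |α - β|)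
    (α : ℝ) (αseq : ℕ → ℝ) (H : ℕ → StripDiffeo m)
    (hmono : Antitone fun n => |α - αseq n|)
    (hlim : Tendsto (fun n => |α - αseq n|) atTop (nhds 0))
    (hclose : ∀ n, |α - αseq n| ≤
      1 / (2 * kseq n * C (kseq n) * normk m (kseq n + 1) (H n) ^ (kseq n + 1)))
    (F : ℕ → StripDiffeo m) (hF : ∀ n, F n = (H n).conj (αseq (n + 1)))
    (hcompat : ∀ n, (H (n + 1)).conj (αseq (n + 1)) = (H n).conj (αseq (n + 1)))
    (Fhat : ℕ → StripDiffeo m) (hFhat : ∀ n, Fhat n = (H n).conj α)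
    (f : StripDiffeo m)
    (hf : ∀ k : ℕ, Tendsto (fun n => dkDist m k (F n) f) atTop (nhds 0)) :
    (∀ n, ∀ k ≤ kseq n, dkDist m k (F n) (Fhat n) ≤ 1 / kseq n) ∧
    Tendsto (fun n => dinf m (Fhat n) f) atTop (nhds 0) ∧
    ∀ δ : ℝ, 0 < δ → ∃ h : StripDiffeo m, dinf m f (h.conj α) < δ := by
  -- Part 1
  have part1 : ∀ n, ∀ k ≤ kseq n, dkDist m k (F n) (Fhat n) ≤ 1 / kseq n := by
    intro n k hkle
    have hK1 : (1 : ℝ) ≤ kseq n := by exact_mod_cast hkpos n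
    have hKpos : (0 : ℝ) < kseq n := by linarith
    set P := C (kseq n) * normk m (kseq n + 1) (H n) ^ (kseq n + 1) with hPdef
    have hP : 0 ≤ P := mul_nonneg (hCpos _).le (pow_nonneg normk_nonneg _)
    have h2 := hC (kseq n) (H n) (αseq (n + 1)) α
    have hd : |αseq (n + 1) - α| ≤ |α - αseq n| := by
      rw [abs_sub_comm]; exact hmono (Nat.le_succ n)
    have key : dkDist m (kseq n) ((H n).conj (αseq (n + 1))) ((H n).conj α)
        ≤ 1 / kseq n := by
      rcases hP.eq_or_lt with hP0 | hPgt
      · have : dkDist m (kseq n) ((H n).conj (αseq (n + 1))) ((H n).conj α) ≤ 0 := by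
          refine h2.trans_eq ?_
          rw [← hPdef, ← hP0, zero_mul]
        exact this.trans (by positivity)
      · have hcl := hclose n
        have hcl' : |α - αseq n| ≤ 1 / (2 * kseq n * P) := by
          refine hcl.trans_eq ?_
          rw [hPdef, mul_assoc]
        calc dkDist m (kseq n) ((H n).conj (αseq (n + 1))) ((H n).conj α)
            ≤ P * |αseq (n + 1) - α| := h2
          _ ≤ P * (1 / (2 * kseq n * P)) :=
              mul_le_mul_of_nonneg_left (hd.trans hcl') hP
          _ = 1 / (2 * kseq n) := by
              rw [mul_one_div, div_eq_div_iff (by positivity) (by positivity)]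
              ring
          _ ≤ 1 / kseq n := by
              apply one_div_le_one_div_of_le hKpos; linarith
    rw [hF, hFhat]
    exact (dkDist_mono hkle).trans key
  -- auxiliary limits
  have hkinv : Tendsto (fun n => 1 / (kseq n : ℝ)) atTop (nhds 0) :=
    tendsto_one_div_atTop_nhds_zero_nat.comp hk.tendsto_atTop
  have hkey : ∀ k : ℕ, Tendsto (fun n => dkDist m k (Fhat n) f) atTop (nhds 0) := by
    intro k
    apply squeeze_zero' (Eventually.of_forall fun n => dkDist_nonneg)
      (g := fun n => 1 / (kseq n : ℝ) + dkDist m k (F n) f)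
    · filter_upwards [eventually_ge_atTop k] with n hn
      have hkn : k ≤ kseq n := le_trans hn hk.le_apply
      have h1 : dkDist m k (Fhat n) (F n) ≤ 1 / kseq n := by
        rw [dkDist_symm]; exact part1 n k hkn
      exact (dkDist_triangle _ _ _).trans (add_le_add h1 le_rfl)
    · simpa using hkinv.add (hf k)
  -- Part 2
  have part2 : Tendsto (fun n => dinf m (Fhat n) f) atTop (nhds 0) := by
    have hsum2 : Summable fun k : ℕ => ((1 : ℝ) / 2) ^ (k + 1) := by
      simpa [pow_succ, one_div] using summable_geometric_two.mul_right (2⁻¹ : ℝ)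
    have := tendsto_tsum_of_dominated_convergence (𝓕 := atTop)
      (f := fun n k => dkDist m (k + 1) (Fhat n) f /
        (2 ^ (k + 1) * (1 + dkDist m (k + 1) (Fhat n) f)))
      (g := fun _ => (0 : ℝ)) (bound := fun k => ((1 : ℝ) / 2) ^ (k + 1))
      hsum2 ?_ ?_
    · simpa [dinf] using this
    · intro k
      have h0 := hkey (k + 1)
      have hden : Tendsto (fun n => (2 : ℝ) ^ (k + 1) * (1 + dkDist m (k + 1) (Fhat n) f))
          atTop (nhds ((2 : ℝ) ^ (k + 1) * (1 + 0))) :=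
        tendsto_const_nhds.mul (tendsto_const_nhds.add h0)
      have := h0.div hden (by positivity)
      simpa [Pi.div_def] using this
    · refine Eventually.of_forall fun n k => ?_
      set d := dkDist m (k + 1) (Fhat n) f with hd
      have hd0 : 0 ≤ d := dkDist_nonneg
      have hpos : (0 : ℝ) < 2 ^ (k + 1) * (1 + d) := by positivity
      rw [Real.norm_eq_abs, abs_of_nonneg (div_nonneg hd0 hpos.le), div_le_iff₀ hpos]
      have e : ((1 : ℝ) / 2) ^ (k + 1) * (2 : ℝ) ^ (k + 1) = 1 := by
        rw [← mul_pow]; norm_num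
      calc d ≤ 1 + d := by linarith
        _ = (1 / 2 : ℝ) ^ (k + 1) * (2 ^ (k + 1) * (1 + d)) := by
            rw [← mul_assoc, e, one_mul]
  refine ⟨part1, part2, ?_⟩
  -- Part 3
  intro δ hδ
  obtain ⟨n, hn⟩ := (part2.eventually_lt_const hδ).exists
  exact ⟨H n, by rw [dinf_symm, ← hFhat n]; exact hn⟩
end
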